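/- Let $R$ be a graph on $t$ vertices, $M$ a maximum matching in $R$, and $U = V(R)\setminus V(M)$. Partition $V(M)$ into sets $X$ and $Y$ by placing, for each edge $xy \in M$, one endpoint with at most one neighbour in $U$ into $X$ and the other into $Y$. Then for every edge $xy$ of $R$ with both endpoints in $X$, letting $x', y' \in Y$ be the vertices matched to $x$ and $y$ respectively, at least one of $x'$, $y'$ has at most one neighbour in $U$. -/

import Mathlib

/-!
If `x'` and `y'` both had two neighbours in `U`, pick distinct `x'' ∼ x'` and `y'' ∼ y'` in `U`.
Then `x'' x' x y y' y''` is an augmenting path: trading `xx', yy'` for `xy, x'x'', y'y''` gives a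
larger matching.
-/

open Finset

variable {V : Type*}

def PairwiseVertexDisjoint (M : Finset (Sym2 V)) : Prop :=
  (M : Set (Sym2 V)).Pairwise fun e f => ∀ v : V, v ∈ e → v ∉ f

namespace PairwiseVertexDisjoint

variable {M : Finset (Sym2 V)}

theorem eq_of_mem (hM : PairwiseVertexDisjoint M) {e f : Sym2 V} (he : e ∈ M) (hf : f ∈ M)
    {v : V} (hve : v ∈ e) (hvf : v ∈ f) : e = f := by
  by_contra hef
  exact hM he hf hef v hve hvf

variable [DecidableEq V]

theorem sdiff_union {S T : Finset (Sym2 V)} (hM : PairwiseVertexDisjoint M)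
    (hT : PairwiseVertexDisjoint T) (hTM : ∀ t ∈ T, ∀ v ∈ t, ∀ e ∈ M \ S, v ∉ e) :
    PairwiseVertexDisjoint (M \ S ∪ T) := by
  intro e he f hf hef v hve hvf
  rcases mem_union.mp he with heM | heT <;> rcases mem_union.mp hf with hfM | hfT
  · exact hM (mem_sdiff.mp heM).1 (mem_sdiff.mp hfM).1 hef v hve hvf
  · exact hTM f hfT v hvf e heM hve
  · exact hTM e heT v hve f hfM hvf
  · exact hT heT hfT hef v hve hvf

theorem card_le_of_exchange {E S T : Finset (Sym2 V)} (hME : M ⊆ E) (hM : PairwiseVertexDisjoint M)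
    (hmax : ∀ M' ⊆ E, PairwiseVertexDisjoint M' → M'.card ≤ M.card)
    (hSM : S ⊆ M) (hTE : T ⊆ E) (hT : PairwiseVertexDisjoint T)
    (hTfree : ∀ t ∈ T, ∀ v ∈ t, (∃ s ∈ S, v ∈ s) ∨ ∀ e ∈ M, v ∉ e) :
    T.card ≤ S.card := by
  have hTM : ∀ t ∈ T, ∀ v ∈ t, ∀ e ∈ M \ S, v ∉ e := by
    intro t ht v hvt e he hve
    obtain ⟨heM, heS⟩ := mem_sdiff.mp he
    rcases hTfree t ht v hvt with ⟨s, hs, hvs⟩ | hfree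
    · exact heS (hM.eq_of_mem heM (hSM hs) hve hvs ▸ hs)
    · exact hfree e heM hve
  have hdisj : Disjoint (M \ S) T := disjoint_left.mpr fun t htM htT =>
    hTM t htT _ t.out_fst_mem t htM t.out_fst_mem
  have hcard := hmax _ (union_subset (sdiff_subset.trans hME) hTE) (hM.sdiff_union hT hTM)
  rw [card_union_of_disjoint hdisj, card_sdiff_of_subset hSM] at hcard
  have hSle := card_le_card hSM
  omega

end PairwiseVertexDisjoint

variable [DecidableEq V]

theorem card_neighborFinset_inter_le_one_or [Fintype V] {R : SimpleGraph V} [DecidableRel R.Adj]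
    {M : Finset (Sym2 V)} (hME : M ⊆ R.edgeFinset) (hM : PairwiseVertexDisjoint M)
    (hmax : ∀ M' ⊆ R.edgeFinset, PairwiseVertexDisjoint M' → M'.card ≤ M.card)
    {U : Finset V} (hU : ∀ v, v ∈ U ↔ ∀ e ∈ M, v ∉ e)
    {x y x' y' : V} (hxy : R.Adj x y) (hxx' : s(x, x') ∈ M) (hyy' : s(y, y') ∈ M)
    (hne : s(x, x') ≠ s(y, y')) :
    (R.neighborFinset x' ∩ U).card ≤ 1 ∨ (R.neighborFinset y' ∩ U).card ≤ 1 := by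
  by_contra! hcard
  obtain ⟨x'', hx''⟩ := card_pos.mp (zero_lt_one.trans hcard.1)
  obtain ⟨y'', hy'', hy''x''⟩ := exists_mem_ne hcard.2 x''
  simp only [mem_inter, SimpleGraph.mem_neighborFinset, hU] at hx'' hy''
  obtain ⟨hx'x'', hx''U⟩ := hx''
  obtain ⟨hy'y'', hy''U⟩ := hy''
  have hx : x ∉ s(y, y') := fun h => hne (hM.eq_of_mem hxx' hyy' (Sym2.mem_mk_left _ _) h)
  have hx' : x' ∉ s(y, y') := fun h => hne (hM.eq_of_mem hxx' hyy' (Sym2.mem_mk_right _ _) h)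
  have hx''M : x'' ∉ s(x, x') ∧ x'' ∉ s(y, y') := ⟨hx''U _ hxx', hx''U _ hyy'⟩
  have hy''M : y'' ∉ s(x, x') ∧ y'' ∉ s(y, y') := ⟨hy''U _ hxx', hy''U _ hyy'⟩
  simp only [Sym2.mem_iff, not_or] at hx hx' hx''M hy''M
  have hxx'R : R.Adj x x' := SimpleGraph.mem_edgeFinset.mp (hME hxx')
  have hyy'R : R.Adj y y' := SimpleGraph.mem_edgeFinset.mp (hME hyy')
  set S : Finset (Sym2 V) := {s(x, x'), s(y, y')}
  set T : Finset (Sym2 V) := {s(x, y), s(x', x''), s(y', y'')}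
  have hT : PairwiseVertexDisjoint T := by
    simp only [T, PairwiseVertexDisjoint, coe_insert, coe_singleton, Set.pairwise_insert,
      Set.pairwise_singleton, Set.mem_insert_iff, Set.mem_singleton_iff, Sym2.mem_iff]
    grind [hxx'R.ne, hyy'R.ne]
  have hTfree : ∀ t ∈ T, ∀ v ∈ t, (∃ s ∈ S, v ∈ s) ∨ ∀ e ∈ M, v ∉ e := by
    simp only [T, S, mem_insert, mem_singleton, exists_eq_or_imp, Sym2.mem_iff, existsAndEq,
      true_and, or_imp, forall_and, forall_eq, true_or, or_true, and_self]
    exact ⟨.inr hx''U, .inr hy''U⟩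
  have hTcard : T.card = 3 := by
    rw [card_insert_of_notMem, card_pair]
    all_goals grind [Sym2.eq_iff]
  have hST : T.card ≤ S.card := hM.card_le_of_exchange hME hmax
    (by simp [S, insert_subset_iff, hxx', hyy']) (by simp [T, insert_subset_iff, hxy, hx'x'', hy'y''])
    hT hTfree
  have hScard : S.card ≤ 2 := card_le_two
  omega

theorem stmt_13_general {V : Type} [Fintype V] [DecidableEq V]
    (R : SimpleGraph V) [DecidableRel R.Adj]
    (M : Finset (Sym2 V)) (hMe : M ⊆ R.edgeFinset)
    (hMm : (M : Set (Sym2 V)).Pairwise (fun e f => ∀ v : V, v ∈ e → v ∉ f))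
    (hmax : ∀ M' : Finset (Sym2 V), M' ⊆ R.edgeFinset →
      ((M' : Set (Sym2 V)).Pairwise (fun e f => ∀ v : V, v ∈ e → v ∉ f)) →
      M'.card ≤ M.card)
    (U : Finset V) (hU : ∀ v : V, v ∈ U ↔ ∀ e ∈ M, v ∉ e)
    (X Y : Finset V) (hXY : Disjoint X Y)
    (hpair : ∀ x y : V, s(x, y) ∈ M → (x ∈ X ∧ y ∈ Y) ∨ (x ∈ Y ∧ y ∈ X)) :
    ∀ x ∈ X, ∀ y ∈ X, R.Adj x y →
      ∀ x' y' : V, s(x, x') ∈ M → s(y, y') ∈ M →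
        ((R.neighborFinset x') ∩ U).card ≤ 1 ∨
        ((R.neighborFinset y') ∩ U).card ≤ 1 := by
  intro x hxX y hyX hxy x' y' hxx' hyy'
  refine card_neighborFinset_inter_le_one_or hMe hMm hmax hU hxy hxx' hyy' fun hxy' => ?_
  have hy'Y : y' ∈ Y :=
    ((hpair y y' hyy').resolve_right fun h => disjoint_left.mp hXY hyX h.1).2
  rcases Sym2.eq_iff.mp hxy' with ⟨rfl, -⟩ | ⟨rfl, -⟩
  · exact hxy.ne rfl
  · exact disjoint_left.mp hXY hxX hy'Y

/-- Let `M` be a maximum matching in `R` and `U` the set of uncovered vertices.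
Partition `V(M)` into `X` and `Y` so that each edge of `M` has one endpoint in
`X` with at most one neighbour in `U` and the other endpoint in `Y`. Then for
every edge of `R` with both endpoints `x, y ∈ X`, with `x', y' ∈ Y` the matched
partners of `x` and `y`, at least one of `x'`, `y'` has at most one neighbour
in `U`. -/
theorem stmt_13 {V : Type} [Fintype V] [DecidableEq V]
    (R : SimpleGraph V) [DecidableRel R.Adj]
    (M : Finset (Sym2 V)) (hMe : M ⊆ R.edgeFinset)
    (hMm : (M : Set (Sym2 V)).Pairwise (fun e f => ∀ v : V, v ∈ e → v ∉ f))
    (hmax : ∀ M' : Finset (Sym2 V), M' ⊆ R.edgeFinset →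
      ((M' : Set (Sym2 V)).Pairwise (fun e f => ∀ v : V, v ∈ e → v ∉ f)) →
      M'.card ≤ M.card)
    (U : Finset V) (hU : ∀ v : V, v ∈ U ↔ ∀ e ∈ M, v ∉ e)
    (X Y : Finset V) (hXY : Disjoint X Y)
    (hcover : ∀ v : V, v ∈ X ∪ Y ↔ ∃ e ∈ M, v ∈ e)
    (hpair : ∀ x y : V, s(x, y) ∈ M → (x ∈ X ∧ y ∈ Y) ∨ (x ∈ Y ∧ y ∈ X))
    (hXdeg : ∀ x ∈ X, ((R.neighborFinset x) ∩ U).card ≤ 1) :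
    ∀ x ∈ X, ∀ y ∈ X, R.Adj x y →
      ∀ x' y' : V, s(x, x') ∈ M → s(y, y') ∈ M →
        ((R.neighborFinset x') ∩ U).card ≤ 1 ∨
        ((R.neighborFinset y') ∩ U).card ≤ 1 :=
  stmt_13_general R M hMe hMm hmax U hU X Y hXY hpair
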